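/- Let 𝔥, 𝔨 be hyperplanes in a paraclique graph X, let ŝ be a sector delimited by 𝔥 and t̂₁ ≠ t̂₂ be two distinct sectors delimited by 𝔨. Then t̂₁ ∩ ŝ and t̂₂ ∩ ŝ are both nonempty if and only if 𝔥 transverses 𝔨 or 𝔨 ⊆ ŝ. -/
import Mathlib


attribute [local instance] Classical.propDecidable

variable {V : Type*}

/-- A maximal clique of a simple graph. -/
def IsMaxClique (G : SimpleGraph V) (s : Set V) : Prop :=
  G.IsClique s ∧ ∀ t : Set V, G.IsClique t → s ⊆ t → s = t

/-- A set of vertices is gated: every vertex has a gate in it. -/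
def IsGated (G : SimpleGraph V) (s : Set V) : Prop :=
  ∀ x : V, ∃ g ∈ s, ∀ y ∈ s, G.dist x y = G.dist x g + G.dist g y

/-- Combinatorial distance between two sets of vertices. -/
noncomputable def setDist (G : SimpleGraph V) (s t : Set V) : ℕ :=
  sInf {n | ∃ x ∈ s, ∃ y ∈ t, G.dist x y = n}

/-- Two cliques are parallel: there is a bijection moving every vertex by the set
distance `D`, all other cross-distances being `D + 1`. -/
def Parallel (G : SimpleGraph V) (s t : Set V) : Prop :=
  ∃ f : V → V, Set.BijOn f s t ∧ ∀ x ∈ s, G.dist x (f x) = setDist G s t ∧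
    ∀ y ∈ t, y ≠ f x → G.dist x y = setDist G s t + 1

/-- A paraclique graph: every maximal clique is gated and parallelism of maximal
cliques is transitive. -/
def IsParaclique (G : SimpleGraph V) : Prop :=
  (∀ s : Set V, IsMaxClique G s → IsGated G s) ∧
  (∀ s t u : Set V, IsMaxClique G s → IsMaxClique G t → IsMaxClique G u →
    Parallel G s t → Parallel G t u → Parallel G s u)

/-- The edges of a clique. -/
def cliqueEdges (Δ : Set V) : Set (Sym2 V) :=
  {e | ∃ u ∈ Δ, ∃ v ∈ Δ, u ≠ v ∧ e = s(u, v)}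

/-- A hyperplane: the union of the edge sets of the maximal cliques in one
parallelism class. -/
def IsHyperplane (G : SimpleGraph V) (H : Set (Sym2 V)) : Prop :=
  ∃ Δ : Set V, IsMaxClique G Δ ∧
    H = ⋃ Δ' ∈ {Δ' : Set V | IsMaxClique G Δ' ∧ Parallel G Δ Δ'}, cliqueEdges Δ'

/-- Two vertices lie in the same sector delimited by the hyperplane `H` if they are
connected in the graph with the edges of `H` removed. -/
def SameSector (G : SimpleGraph V) (H : Set (Sym2 V)) (u v : V) : Prop :=
  (G.deleteEdges H).Reachable u v

/-- The sector (delimited by `H`) containing the vertex `v`. -/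
def sectorOf (G : SimpleGraph V) (H : Set (Sym2 V)) (v : V) : Set V :=
  {u | SameSector G H u v}

/-- The set of sectors delimited by the hyperplane `H`. -/
def Sectors (G : SimpleGraph V) (H : Set (Sym2 V)) : Set (Set V) :=
  Set.range (sectorOf G H)

/-- Two hyperplanes transverse: no sector of one is contained in a sector of the other. -/
def Transverse (G : SimpleGraph V) (H K : Set (Sym2 V)) : Prop :=
  ∀ S ∈ Sectors G H, ∀ T ∈ Sectors G K, ¬ S ⊆ T ∧ ¬ T ⊆ S

/-- The set of vertices of a hyperplane. -/
def hypVerts (K : Set (Sym2 V)) : Set V := {v | ∃ e ∈ K, v ∈ e}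

section Aux

open SimpleGraph

variable {V : Type*} {G : SimpleGraph V}

/-- The gate map of a set `Δ` (meaningful when `Δ` is gated). -/
noncomputable def gm (G : SimpleGraph V) (Δ : Set V) (x : V) : V :=
  if h : ∃ g ∈ Δ, ∀ y ∈ Δ, G.dist x y = G.dist x g + G.dist g y then h.choose else x

lemma gm_spec {Δ : Set V} (hg : IsGated G Δ) (x : V) :
    gm G Δ x ∈ Δ ∧ ∀ y ∈ Δ, G.dist x y = G.dist x (gm G Δ x) + G.dist (gm G Δ x) y := by
  have h := hg x
  rw [gm, dif_pos h]
  exact ⟨h.choose_spec.1, h.choose_spec.2⟩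

lemma gm_mem {Δ : Set V} (hg : IsGated G Δ) (x : V) : gm G Δ x ∈ Δ := (gm_spec hg x).1

lemma gm_dist {Δ : Set V} (hg : IsGated G Δ) {x y : V} (hy : y ∈ Δ) :
    G.dist x y = G.dist x (gm G Δ x) + G.dist (gm G Δ x) y := (gm_spec hg x).2 y hy

lemma gm_dist_le {Δ : Set V} (hg : IsGated G Δ) {x y : V} (hy : y ∈ Δ) :
    G.dist x (gm G Δ x) ≤ G.dist x y := by
  rw [gm_dist hg hy]; omega

lemma gm_self (hconn : G.Connected) {Δ : Set V} (hg : IsGated G Δ) {x : V} (hx : x ∈ Δ) :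
    gm G Δ x = x := by
  have h := gm_dist hg (x := x) hx
  rw [SimpleGraph.dist_self] at h
  have h1 : G.dist x (gm G Δ x) = 0 := by omega
  exact ((hconn.dist_eq_zero_iff).mp h1).symm

lemma clique_dist_one (hc : G.IsClique Δ) {x y : V} (hx : x ∈ Δ) (hy : y ∈ Δ) (hne : x ≠ y) :
    G.dist x y = 1 :=
  SimpleGraph.dist_eq_one_iff_adj.mpr (hc hx hy hne)

lemma setDist_le {s t : Set V} {x y : V} (hx : x ∈ s) (hy : y ∈ t) :
    setDist G s t ≤ G.dist x y :=
  Nat.sInf_le ⟨x, hx, y, hy, rfl⟩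

lemma setDist_eq {s t : Set V} {x y : V} {k : ℕ} (hx : x ∈ s) (hy : y ∈ t)
    (hxy : G.dist x y = k) (hlb : ∀ x' ∈ s, ∀ y' ∈ t, k ≤ G.dist x' y') :
    setDist G s t = k := by
  refine le_antisymm (hxy ▸ setDist_le hx hy) (le_csInf ⟨k, x, hx, y, hy, hxy⟩ ?_)
  rintro n ⟨x', hx', y', hy', rfl⟩
  exact hlb x' hx' y' hy'

lemma setDist_comm {s t : Set V} : setDist G s t = setDist G t s := by
  unfold setDist
  congr 1
  ext n
  constructor
  · rintro ⟨x, hx, y, hy, rfl⟩; exact ⟨y, hy, x, hx, SimpleGraph.dist_comm⟩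
  · rintro ⟨y, hy, x, hx, rfl⟩; exact ⟨x, hx, y, hy, SimpleGraph.dist_comm⟩

lemma par_symm {s t : Set V} (h : Parallel G s t) : Parallel G t s := by
  obtain ⟨f, ⟨hmap, hinj, hsurj⟩, hd⟩ := h
  classical
  set g : V → V := fun y => if h : ∃ x ∈ s, f x = y then h.choose else y with hg
  have hgs : ∀ y ∈ t, g y ∈ s ∧ f (g y) = y := by
    intro y hy
    obtain ⟨x, hx, hfx⟩ := hsurj hy
    have hex : ∃ x ∈ s, f x = y := ⟨x, hx, hfx⟩
    rw [hg]; simp only [dif_pos hex]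
    exact ⟨hex.choose_spec.1, hex.choose_spec.2⟩
  refine ⟨g, ⟨fun y hy => (hgs y hy).1, ?_, ?_⟩, ?_⟩
  · intro y hy y' hy' hE
    rw [← (hgs y hy).2, ← (hgs y' hy').2, hE]
  · intro x hx
    have hy : f x ∈ t := hmap hx
    refine ⟨f x, hy, ?_⟩
    exact hinj ((hgs _ hy).1) hx ((hgs _ hy).2)
  · intro y hy
    obtain ⟨hgy, hfg⟩ := hgs y hy
    have h1 := (hd (g y) hgy).1
    rw [hfg] at h1
    constructor
    · rw [SimpleGraph.dist_comm, setDist_comm (s := t) (t := s)]; exact h1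
    · intro x' hx' hne
      have hyne : y ≠ f x' := by
        intro hE
        refine hne (hinj hx' hgy ?_)
        rw [← hE, hfg]
      rw [SimpleGraph.dist_comm, setDist_comm (s := t) (t := s)]
      exact (hd x' hx').2 y hy hyne

lemma par_refl {s : Set V} (hc : G.IsClique s) : Parallel G s s := by
  refine ⟨id, ⟨fun x hx => hx, fun x _ y _ h => h, fun x hx => ⟨x, hx, rfl⟩⟩, ?_⟩
  intro x hx
  have hsd : setDist G s s = 0 :=
    setDist_eq hx hx (SimpleGraph.dist_self) (fun _ _ _ _ => Nat.zero_le _)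
  rw [hsd]
  exact ⟨SimpleGraph.dist_self, fun y hy hne =>
    clique_dist_one hc hx hy (Ne.symm hne)⟩

/-- Every clique extends to a maximal clique. -/
lemma exists_maxclique (s : Set V) (hc : G.IsClique s) :
    ∃ Δ : Set V, IsMaxClique G Δ ∧ s ⊆ Δ := by
  have hub : ∀ c ⊆ {t : Set V | G.IsClique t}, IsChain (· ⊆ ·) c → c.Nonempty →
      ∃ ub ∈ {t : Set V | G.IsClique t}, ∀ s ∈ c, s ⊆ ub := by
    intro c hcS hchain _
    refine ⟨⋃₀ c, ?_, fun s hs => Set.subset_sUnion_of_mem hs⟩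
    intro x hx y hy hne
    obtain ⟨a, ha, hxa⟩ := hx
    obtain ⟨b, hb, hyb⟩ := hy
    rcases eq_or_ne a b with rfl | hab
    · exact hcS ha hxa hyb hne
    rcases hchain ha hb hab with h | h
    · exact hcS hb (h hxa) hyb hne
    · exact hcS ha hxa (h hyb) hne
  obtain ⟨m, hsm, hmax⟩ := zorn_subset_nonempty {t : Set V | G.IsClique t} hub s hc
  refine ⟨m, ⟨hmax.1, fun t ht hmt => hmt.antisymm (hmax.2 ht hmt)⟩, hsm⟩

end Aux
section Aux2

open SimpleGraph

variable {V : Type*} {G : SimpleGraph V}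

lemma clique_dist_le_one (hc : G.IsClique Δ) {x y : V} (hx : x ∈ Δ) (hy : y ∈ Δ) :
    G.dist x y ≤ 1 := by
  rcases eq_or_ne x y with rfl | hne
  · simp [SimpleGraph.dist_self]
  · rw [clique_dist_one hc hx hy hne]

lemma edge_mem_H {Δ : Set V} {H : Set (Sym2 V)}
    (hHeq : H = ⋃ Δ' ∈ {Δ' : Set V | IsMaxClique G Δ' ∧ Parallel G Δ Δ'}, cliqueEdges Δ')
    {Δ' : Set V} (h' : IsMaxClique G Δ' ∧ Parallel G Δ Δ') {x y : V}
    (hx : x ∈ Δ') (hy : y ∈ Δ') (hne : x ≠ y) : s(x, y) ∈ H := by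
  rw [hHeq]
  exact Set.mem_biUnion h' ⟨x, hx, y, hy, hne, rfl⟩

lemma mem_edge_H {Δ : Set V} {H : Set (Sym2 V)}
    (hHeq : H = ⋃ Δ' ∈ {Δ' : Set V | IsMaxClique G Δ' ∧ Parallel G Δ Δ'}, cliqueEdges Δ')
    {u v : V} (he : s(u, v) ∈ H) :
    u ≠ v ∧ ∃ Δ' : Set V, (IsMaxClique G Δ' ∧ Parallel G Δ Δ') ∧ u ∈ Δ' ∧ v ∈ Δ' := by
  rw [hHeq] at he
  obtain ⟨Δ', h', x, hx, y, hy, hne, hE⟩ := Set.mem_iUnion₂.mp he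
  rw [Sym2.eq_iff] at hE
  rcases hE with ⟨rfl, rfl⟩ | ⟨rfl, rfl⟩
  · exact ⟨hne, Δ', h', hx, hy⟩
  · exact ⟨hne.symm, Δ', h', hy, hx⟩

lemma cls_par (hpc : IsParaclique G) {Δ Δ₁ Δ₂ : Set V} (hΔ : IsMaxClique G Δ)
    (h1 : IsMaxClique G Δ₁ ∧ Parallel G Δ Δ₁) (h2 : IsMaxClique G Δ₂ ∧ Parallel G Δ Δ₂) :
    Parallel G Δ₁ Δ₂ :=
  hpc.2 Δ₁ Δ Δ₂ h1.1 hΔ h2.1 (par_symm h1.2) h2.2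

lemma par_gm_dist {s t : Set V} (hp : Parallel G s t) (hgt : IsGated G t) {x : V} (hx : x ∈ s) :
    G.dist x (gm G t x) = setDist G s t := by
  obtain ⟨f, ⟨hmap, _, _⟩, hd⟩ := hp
  have h1 : G.dist x (f x) = setDist G s t := (hd x hx).1
  have hle : G.dist x (gm G t x) ≤ setDist G s t := h1 ▸ gm_dist_le hgt (hmap hx)
  rcases eq_or_ne (gm G t x) (f x) with hE | hne
  · rw [hE]; exact h1
  · have := (hd x hx).2 (gm G t x) (gm_mem hgt x) hne
    omega

lemma gate_pin (hconn : G.Connected) {Δ'' : Set V} (hg : IsGated G Δ'')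
    (hcl : G.IsClique Δ'') {c p q : V} (hp : p ∈ Δ'') (hq : q ∈ Δ'') {n : ℕ}
    (hdp : G.dist c p = n) (hdq : G.dist c q = n + 1) :
    gm G Δ'' c = p ∧ ∀ w ∈ Δ'', w ≠ p → G.dist c w = n + 1 := by
  have hgm := gm_mem hg c
  have sp := gm_dist hg (x := c) hp
  have sq := gm_dist hg (x := c) hq
  have h1 : G.dist (gm G Δ'' c) p ≤ 1 := clique_dist_le_one hcl hgm hp
  have h2 : G.dist (gm G Δ'' c) q ≤ 1 := clique_dist_le_one hcl hgm hq
  have hm : G.dist c (gm G Δ'' c) = n ∧ G.dist (gm G Δ'' c) p = 0 := by omega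
  have hgp : gm G Δ'' c = p := (hconn.dist_eq_zero_iff).mp hm.2
  refine ⟨hgp, fun w hw hwp => ?_⟩
  rw [gm_dist hg (x := c) hw, hgp, hdp, clique_dist_one hcl hp hw (Ne.symm hwp)]

end Aux2
section Aux3

open SimpleGraph

variable {V : Type*} {G : SimpleGraph V}

/-- **Crossing lemma**: if two adjacent vertices have distinct gates in a clique of the
parallelism class of a hyperplane `H`, then the edge between them belongs to `H`. -/
lemma cross_edge (hconn : G.Connected) (hpc : IsParaclique G) {Δ : Set V}
    (hΔ : IsMaxClique G Δ) {H : Set (Sym2 V)}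
    (hHeq : H = ⋃ Δ' ∈ {Δ' : Set V | IsMaxClique G Δ' ∧ Parallel G Δ Δ'}, cliqueEdges Δ')
    {Δ' : Set V} (hΔ' : IsMaxClique G Δ' ∧ Parallel G Δ Δ') {x y : V}
    (hadj : G.Adj x y) (hgne : gm G Δ' x ≠ gm G Δ' y) : s(x, y) ∈ H := by
  have hg' : IsGated G Δ' := hpc.1 Δ' hΔ'.1
  have hcl' : G.IsClique Δ' := hΔ'.1.1
  set a := gm G Δ' x with ha_def
  set b := gm G Δ' y with hb_def
  have ha : a ∈ Δ' := gm_mem hg' x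
  have hb : b ∈ Δ' := gm_mem hg' y
  set d := G.dist x a with hd_def
  have hab1 : G.dist a b = 1 := clique_dist_one hcl' ha hb hgne
  have hxy1 : G.dist x y = 1 := SimpleGraph.dist_eq_one_iff_adj.mpr hadj
  have hxb : G.dist x b = d + 1 := by
    rw [gm_dist hg' (x := x) hb, ← ha_def, ← hd_def, hab1]
  have hya' : G.dist y a = G.dist y b + 1 := by
    rw [gm_dist hg' (x := y) ha, ← hb_def, SimpleGraph.dist_comm (u := b), hab1]
  have dyb : G.dist y b = d := by
    have t1 : G.dist x b ≤ G.dist x y + G.dist y b := hconn.dist_triangle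
    have t2 : G.dist y a ≤ G.dist y x + G.dist x a := hconn.dist_triangle
    rw [SimpleGraph.dist_comm (u := y) (v := x)] at t2
    omega
  have hya : G.dist y a = d + 1 := by omega
  -- a maximal clique containing the edge x y
  have hcxy : G.IsClique {x, y} := by
    intro u hu v hv hne
    rcases hu with rfl | hu <;> rcases hv with rfl | hv
    · exact absurd rfl hne
    · rw [Set.mem_singleton_iff] at hv; subst hv; exact hadj
    · rw [Set.mem_singleton_iff] at hu; subst hu; exact hadj.symm
    · rw [Set.mem_singleton_iff] at hu hv; subst hu; subst hv; exact absurd rfl hne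
  obtain ⟨Δ'', hΔ''max, hsub⟩ := exists_maxclique {x, y} hcxy
  have hx'' : x ∈ Δ'' := hsub (by simp)
  have hy'' : y ∈ Δ'' := hsub (by simp)
  have hg'' : IsGated G Δ'' := hpc.1 Δ'' hΔ''max
  have hcl'' : G.IsClique Δ'' := hΔ''max.1
  have pinA := gate_pin hconn hg'' hcl'' hx'' hy''
    (c := a) (SimpleGraph.dist_comm.trans hd_def.symm) (SimpleGraph.dist_comm.trans hya)
  have pinB := gate_pin hconn hg'' hcl'' hy'' hx''
    (c := b) (SimpleGraph.dist_comm.trans dyb) (SimpleGraph.dist_comm.trans hxb)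
  -- every vertex of Δ'' is at distance d from its gate in Δ'
  have key : ∀ z ∈ Δ'', G.dist z (gm G Δ' z) = d := by
    intro z hz
    rcases eq_or_ne z x with rfl | hzx
    · exact hd_def.symm
    rcases eq_or_ne z y with rfl | hzy
    · exact dyb
    have hza : G.dist z a = d + 1 := SimpleGraph.dist_comm.trans (pinA.2 z hz hzx)
    have hzb : G.dist z b = d + 1 := SimpleGraph.dist_comm.trans (pinB.2 z hz hzy)
    have sa := gm_dist hg' (x := z) ha
    have sb := gm_dist hg' (x := z) hb
    have hga : G.dist (gm G Δ' z) a ≤ 1 := clique_dist_le_one hcl' (gm_mem hg' z) ha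
    have hgb : G.dist (gm G Δ' z) b ≤ 1 := clique_dist_le_one hcl' (gm_mem hg' z) hb
    rcases Nat.eq_zero_or_pos (G.dist (gm G Δ' z) a) with h0 | hpos
    · exfalso
      have : gm G Δ' z = a := (hconn.dist_eq_zero_iff).mp h0
      rw [this, hab1] at sb
      omega
    · omega
  -- lower bound for distances between Δ'' and Δ'
  have lb : ∀ z ∈ Δ'', ∀ c ∈ Δ', d ≤ G.dist z c := by
    intro z hz c hc
    rw [gm_dist hg' (x := z) hc, key z hz]
    omega
  have hsd : setDist G Δ'' Δ' = d := setDist_eq hx'' ha hd_def.symm lb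
  -- injectivity of the gate map on Δ''
  have hinj : Set.InjOn (gm G Δ') Δ'' := by
    intro z hz z' hz' hE
    by_contra hne
    set c := gm G Δ' z with hc_def
    have hc : c ∈ Δ' := gm_mem hg' z
    have h1 : G.dist c z = d := SimpleGraph.dist_comm.trans (key z hz)
    have h2 : G.dist c z' = d := by
      rw [SimpleGraph.dist_comm]
      have := key z' hz'
      rw [← hE] at this
      exact this
    have hgmem := gm_mem hg'' c
    have s1 := gm_dist hg'' (x := c) hz
    have s2 := gm_dist hg'' (x := c) hz'
    have hcg : d ≤ G.dist c (gm G Δ'' c) := by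
      rw [SimpleGraph.dist_comm]
      exact lb _ hgmem _ hc
    have e1 : G.dist (gm G Δ'' c) z = 0 := by omega
    have e2 : G.dist (gm G Δ'' c) z' = 0 := by omega
    exact hne (((hconn.dist_eq_zero_iff).mp e1).symm.trans ((hconn.dist_eq_zero_iff).mp e2))
  -- surjectivity of the gate map onto Δ'
  have hsurj : ∀ c ∈ Δ', ∃ z ∈ Δ'', gm G Δ' z = c := by
    intro c hc
    refine ⟨gm G Δ'' c, gm_mem hg'' c, ?_⟩
    by_contra hne
    set g := gm G Δ'' c with hg_def
    have hgmem : g ∈ Δ'' := gm_mem hg'' c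
    have hgc : G.dist c g = d + 1 := by
      rw [SimpleGraph.dist_comm, gm_dist hg' (x := g) hc, key g hgmem,
        clique_dist_one hcl' (gm_mem hg' g) hc hne]
    have sx := gm_dist hg'' (x := c) hx''
    have sy := gm_dist hg'' (x := c) hy''
    rw [← hg_def] at sx sy
    have hcx : G.dist c x ≤ d + 1 := by
      rw [SimpleGraph.dist_comm, gm_dist hg' (x := x) hc, ← ha_def, ← hd_def]
      have : G.dist a c ≤ 1 := clique_dist_le_one hcl' ha hc
      omega
    have hcy : G.dist c y ≤ d + 1 := by
      rw [SimpleGraph.dist_comm, gm_dist hg' (x := y) hc, ← hb_def, dyb]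
      have : G.dist b c ≤ 1 := clique_dist_le_one hcl' hb hc
      omega
    have hgx : G.dist g x = 0 := by omega
    have hgy : G.dist g y = 0 := by omega
    have : x = y := ((hconn.dist_eq_zero_iff).mp hgx).symm.trans ((hconn.dist_eq_zero_iff).mp hgy)
    exact hadj.ne this
  -- Δ'' is parallel to Δ', hence in the class of Δ
  have hpar'' : Parallel G Δ'' Δ' := by
    refine ⟨gm G Δ', ⟨fun z _ => gm_mem hg' z, hinj, ?_⟩, ?_⟩
    · intro c hc
      obtain ⟨z, hz, hE⟩ := hsurj c hc
      exact ⟨z, hz, hE⟩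
    · intro z hz
      rw [hsd]
      refine ⟨key z hz, fun c hc hcne => ?_⟩
      rw [gm_dist hg' (x := z) hc, key z hz,
        clique_dist_one hcl' (gm_mem hg' z) hc (Ne.symm hcne)]
  have hfin : Parallel G Δ Δ'' :=
    hpc.2 Δ Δ' Δ'' hΔ hΔ'.1 hΔ''max hΔ'.2 (par_symm hpar'')
  exact edge_mem_H hHeq ⟨hΔ''max, hfin⟩ hx'' hy'' hadj.ne

end Aux3
section Aux4

open SimpleGraph

variable {V : Type*} {G : SimpleGraph V}

lemma sector_refl (H : Set (Sym2 V)) (v : V) : v ∈ sectorOf G H v := Reachable.refl v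

lemma mem_sectorOf {H : Set (Sym2 V)} {u v : V} :
    u ∈ sectorOf G H v ↔ (G.deleteEdges H).Reachable u v := Iff.rfl

lemma sectorOf_eq_of_reach {H : Set (Sym2 V)} {u v : V}
    (h : (G.deleteEdges H).Reachable u v) : sectorOf G H u = sectorOf G H v := by
  ext w
  exact ⟨fun hw => hw.trans h, fun hw => hw.trans h.symm⟩

lemma sectorOf_eq_iff {H : Set (Sym2 V)} {u v : V} :
    sectorOf G H u = sectorOf G H v ↔ (G.deleteEdges H).Reachable u v := by
  refine ⟨fun h => ?_, sectorOf_eq_of_reach⟩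
  have : u ∈ sectorOf G H v := h ▸ sector_refl H u
  exact this

/-- The gate map to a clique of the class of `H` is constant on sectors. -/
lemma gm_const_reach (hconn : G.Connected) (hpc : IsParaclique G) {Δ : Set V}
    (hΔ : IsMaxClique G Δ) {H : Set (Sym2 V)}
    (hHeq : H = ⋃ Δ' ∈ {Δ' : Set V | IsMaxClique G Δ' ∧ Parallel G Δ Δ'}, cliqueEdges Δ')
    {Δ' : Set V} (hΔ' : IsMaxClique G Δ' ∧ Parallel G Δ Δ') {u v : V}
    (h : (G.deleteEdges H).Reachable u v) : gm G Δ' u = gm G Δ' v := by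
  obtain ⟨p⟩ := h
  induction p with
  | nil => rfl
  | cons hadj _ ih =>
    rename_i x z w hp
    have hGadj : G.Adj x z ∧ s(x, z) ∉ H := SimpleGraph.deleteEdges_adj.mp hadj
    have hxz : gm G Δ' x = gm G Δ' z := by
      by_contra hne
      exact hGadj.2 (cross_edge hconn hpc hΔ hHeq hΔ' hGadj.1 hne)
    exact hxz.trans ih

lemma exists_adj_dist (hconn : G.Connected) {x y : V} (h : 0 < G.dist x y) :
    ∃ w, G.Adj x w ∧ G.dist w y = G.dist x y - 1 := by
  obtain ⟨p, hp⟩ := hconn.exists_walk_length_eq_dist x y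
  cases p with
  | nil => rw [← hp] at h; simp at h
  | cons hadj q =>
    rename_i w
    refine ⟨w, hadj, ?_⟩
    simp only [SimpleGraph.Walk.length_cons] at hp
    have h1 : G.dist w y ≤ q.length := SimpleGraph.dist_le q
    have h2 : G.dist x y ≤ G.dist x w + G.dist w y := hconn.dist_triangle
    have h3 : G.dist x w = 1 := SimpleGraph.dist_eq_one_iff_adj.mpr hadj
    omega

/-- Every vertex is connected to its gate inside the complement of the hyperplane. -/
lemma reach_gm (hconn : G.Connected) (hpc : IsParaclique G) {Δ : Set V}
    (hΔ : IsMaxClique G Δ) {H : Set (Sym2 V)}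
    (hHeq : H = ⋃ Δ' ∈ {Δ' : Set V | IsMaxClique G Δ' ∧ Parallel G Δ Δ'}, cliqueEdges Δ')
    {Δ' : Set V} (hΔ' : IsMaxClique G Δ' ∧ Parallel G Δ Δ') (x : V) :
    (G.deleteEdges H).Reachable x (gm G Δ' x) := by
  have hg' : IsGated G Δ' := hpc.1 Δ' hΔ'.1
  suffices h : ∀ n x, G.dist x (gm G Δ' x) = n → (G.deleteEdges H).Reachable x (gm G Δ' x) by
    exact h _ x rfl
  intro n
  induction n using Nat.strong_induction_on with
  | _ n ih =>
    intro x hx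
    rcases Nat.eq_zero_or_pos n with rfl | hpos
    · have : x = gm G Δ' x := (hconn.dist_eq_zero_iff).mp hx
      rw [← this]
    obtain ⟨w, hadj, hwg0⟩ := exists_adj_dist hconn (x := x) (y := gm G Δ' x) (by omega)
    have hwg : G.dist w (gm G Δ' x) = n - 1 := by rw [hwg0, hx]
    · have hnotK : s(x, w) ∉ H := by
        intro hmem
        obtain ⟨hne, Δ''', h''', hx3, hw3⟩ := mem_edge_H hHeq hmem
        have hpar : Parallel G Δ''' Δ' := cls_par hpc hΔ h''' hΔ'
        have e1 : G.dist x (gm G Δ' x) = setDist G Δ''' Δ' := par_gm_dist hpar hg' hx3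
        have e2 : G.dist w (gm G Δ' w) = setDist G Δ''' Δ' := par_gm_dist hpar hg' hw3
        have e3 : G.dist w (gm G Δ' w) ≤ G.dist w (gm G Δ' x) :=
          gm_dist_le hg' (gm_mem hg' x)
        omega
      have hadj' : (G.deleteEdges H).Adj x w :=
        SimpleGraph.deleteEdges_adj.mpr ⟨hadj, hnotK⟩
      have hgweq : gm G Δ' w = gm G Δ' x :=
        (gm_const_reach hconn hpc hΔ hHeq hΔ' hadj'.reachable).symm
      have hreach : (G.deleteEdges H).Reachable w (gm G Δ' w) := by
        refine ih (n - 1) (by omega) w ?_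
        rw [hgweq, hwg]
      exact (hadj'.reachable.trans hreach).trans (by rw [hgweq])

/-- Classification of sectors: membership in a sector is detected by the gate map to any
clique of the class. -/
lemma mem_sector_iff_gm (hconn : G.Connected) (hpc : IsParaclique G) {Δ : Set V}
    (hΔ : IsMaxClique G Δ) {H : Set (Sym2 V)}
    (hHeq : H = ⋃ Δ' ∈ {Δ' : Set V | IsMaxClique G Δ' ∧ Parallel G Δ Δ'}, cliqueEdges Δ')
    {Δ' : Set V} (hΔ' : IsMaxClique G Δ' ∧ Parallel G Δ Δ') {u v : V} :
    u ∈ sectorOf G H v ↔ gm G Δ' u = gm G Δ' v := by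
  constructor
  · exact fun h => gm_const_reach hconn hpc hΔ hHeq hΔ' h
  · intro h
    have h1 := reach_gm hconn hpc hΔ hHeq hΔ' u
    have h2 := reach_gm hconn hpc hΔ hHeq hΔ' v
    exact (h1.trans (h ▸ h2.symm) : _)

end Aux4
section Aux5

open SimpleGraph

variable {V : Type*} {G : SimpleGraph V}

/-- Two maximal gated cliques sharing an edge coincide. -/
lemma maxclique_unique (hconn : G.Connected) (hpc : IsParaclique G) {Δ₁ Δ₂ : Set V}
    (h1 : IsMaxClique G Δ₁) (h2 : IsMaxClique G Δ₂) {x y : V} (hne : x ≠ y)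
    (hx1 : x ∈ Δ₁) (hy1 : y ∈ Δ₁) (hx2 : x ∈ Δ₂) (hy2 : y ∈ Δ₂) : Δ₁ = Δ₂ := by
  have hg1 : IsGated G Δ₁ := hpc.1 Δ₁ h1
  have hsub : Δ₂ ⊆ Δ₁ := by
    intro w hw
    have sx := gm_dist hg1 (x := w) hx1
    have sy := gm_dist hg1 (x := w) hy1
    have dx : G.dist w x ≤ 1 := clique_dist_le_one h2.1 hw hx2
    have dy : G.dist w y ≤ 1 := clique_dist_le_one h2.1 hw hy2
    rcases Nat.eq_zero_or_pos (G.dist w (gm G Δ₁ w)) with h0 | hpos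
    · have : w = gm G Δ₁ w := (hconn.dist_eq_zero_iff).mp h0
      rw [this]; exact gm_mem hg1 w
    · exfalso
      have ex : G.dist (gm G Δ₁ w) x = 0 := by omega
      have ey : G.dist (gm G Δ₁ w) y = 0 := by omega
      exact hne (((hconn.dist_eq_zero_iff).mp ex).symm.trans ((hconn.dist_eq_zero_iff).mp ey))
  exact ((h2.2 Δ₁ h1.1 hsub).symm)

/-- Two hyperplanes sharing an edge are equal. -/
lemma hyp_eq_of_common_edge (hconn : G.Connected) (hpc : IsParaclique G)
    {ΔH ΔK : Set V} (hΔH : IsMaxClique G ΔH) (hΔK : IsMaxClique G ΔK)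
    {H K : Set (Sym2 V)}
    (hHeq : H = ⋃ Δ' ∈ {Δ' : Set V | IsMaxClique G Δ' ∧ Parallel G ΔH Δ'}, cliqueEdges Δ')
    (hKeq : K = ⋃ Δ' ∈ {Δ' : Set V | IsMaxClique G Δ' ∧ Parallel G ΔK Δ'}, cliqueEdges Δ')
    {e : Sym2 V} (heH : e ∈ H) (heK : e ∈ K) : H = K := by
  induction e using Sym2.ind with
  | _ u v =>
  obtain ⟨hne, Δ₁, h1, hu1, hv1⟩ := mem_edge_H hHeq heH
  obtain ⟨-, Δ₂, h2, hu2, hv2⟩ := mem_edge_H hKeq heK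
  have hEq : Δ₁ = Δ₂ := maxclique_unique hconn hpc h1.1 h2.1 hne hu1 hv1 hu2 hv2
  have hsame : ∀ Δ' : Set V, IsMaxClique G Δ' →
      (Parallel G ΔH Δ' ↔ Parallel G ΔK Δ') := by
    intro Δ' hΔ'
    constructor
    · intro hp
      have p1 : Parallel G Δ₂ Δ' := cls_par hpc hΔH (hEq ▸ h1) ⟨hΔ', hp⟩
      exact hpc.2 ΔK Δ₂ Δ' hΔK h2.1 hΔ' h2.2 p1
    · intro hp
      have p1 : Parallel G Δ₁ Δ' := cls_par hpc hΔK (hEq ▸ h2 : IsMaxClique G Δ₁ ∧ _) ⟨hΔ', hp⟩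
      exact hpc.2 ΔH Δ₁ Δ' hΔH h1.1 hΔ' h1.2 p1
  have hsets : {Δ' : Set V | IsMaxClique G Δ' ∧ Parallel G ΔH Δ'} =
      {Δ' : Set V | IsMaxClique G Δ' ∧ Parallel G ΔK Δ'} :=
    Set.ext fun Δ' =>
      ⟨fun h => ⟨h.1, (hsame Δ' h.1).mp h.2⟩, fun h => ⟨h.1, (hsame Δ' h.1).mpr h.2⟩⟩
  rw [hHeq, hKeq, hsets]

lemma exists_bad_edge {G' : SimpleGraph V} (σ : V → V) {x x' : V} (p : G'.Walk x x')
    (h : σ x ≠ σ x') : ∃ u u', G'.Adj u u' ∧ σ u ≠ σ u' ∧ G'.Reachable x u := by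
  induction p with
  | nil => exact absurd rfl h
  | cons hadj q ih =>
    rename_i a b c
    rcases eq_or_ne (σ a) (σ b) with hE | hne
    · obtain ⟨u, u', h1, h2, h3⟩ := ih (hE ▸ h)
      exact ⟨u, u', h1, h2, hadj.reachable.trans h3⟩
    · exact ⟨a, b, hadj, hne, Reachable.refl a⟩

/-- A clique of the class of `K` is connected avoiding any edge set disjoint from `K`. -/
lemma clique_reach {ΔK : Set V} {K : Set (Sym2 V)}
    (hKeq : K = ⋃ Δ' ∈ {Δ' : Set V | IsMaxClique G Δ' ∧ Parallel G ΔK Δ'}, cliqueEdges Δ')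
    {H : Set (Sym2 V)} (hdisj : ∀ e ∈ K, e ∉ H)
    {Δ' : Set V} (hcls : IsMaxClique G Δ' ∧ Parallel G ΔK Δ') {u w : V}
    (hu : u ∈ Δ') (hw : w ∈ Δ') : (G.deleteEdges H).Reachable u w := by
  rcases eq_or_ne u w with rfl | hne
  · exact Reachable.refl u
  have hadj : G.Adj u w := hcls.1.1 hu hw hne
  have hK : s(u, w) ∈ K := edge_mem_H hKeq hcls hu hw hne
  exact (SimpleGraph.deleteEdges_adj.mpr ⟨hadj, hdisj _ hK⟩).reachable

/-- If the gate map to a clique of the class of `K` is non-constant on a component of the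
complement of `H`, and `H`, `K` are edge-disjoint, then that component contains a whole
clique of the class of `K`. -/
lemma clique_in_sector (hconn : G.Connected) (hpc : IsParaclique G) {ΔK : Set V}
    (hΔK : IsMaxClique G ΔK) {K : Set (Sym2 V)}
    (hKeq : K = ⋃ Δ' ∈ {Δ' : Set V | IsMaxClique G Δ' ∧ Parallel G ΔK Δ'}, cliqueEdges Δ')
    {H : Set (Sym2 V)} (hdisj : ∀ e ∈ K, e ∉ H)
    {Δ' : Set V} (hcls : IsMaxClique G Δ' ∧ Parallel G ΔK Δ') {x x' : V}
    (hreach : (G.deleteEdges H).Reachable x x') (hgne : gm G Δ' x ≠ gm G Δ' x') :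
    ∃ ΔB : Set V, (IsMaxClique G ΔB ∧ Parallel G ΔK ΔB) ∧
      ∀ w ∈ ΔB, (G.deleteEdges H).Reachable x w := by
  obtain ⟨p⟩ := hreach
  obtain ⟨u, u', hadj, hune, hxu⟩ := exists_bad_edge (gm G Δ') p hgne
  have hGadj : G.Adj u u' ∧ s(u, u') ∉ H := SimpleGraph.deleteEdges_adj.mp hadj
  have heK : s(u, u') ∈ K := cross_edge hconn hpc hΔK hKeq hcls hGadj.1 hune
  obtain ⟨hne, ΔB, hB, huB, hu'B⟩ := mem_edge_H hKeq heK
  refine ⟨ΔB, hB, fun w hw => hxu.trans (clique_reach hKeq hdisj hB huB hw)⟩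

/-- A vertex of a hyperplane lies in some clique of its class. -/
lemma hyp_vert_clique {ΔK : Set V} {K : Set (Sym2 V)}
    (hKeq : K = ⋃ Δ' ∈ {Δ' : Set V | IsMaxClique G Δ' ∧ Parallel G ΔK Δ'}, cliqueEdges Δ')
    {v : V} (hv : v ∈ hypVerts K) :
    ∃ Δ' : Set V, (IsMaxClique G Δ' ∧ Parallel G ΔK Δ') ∧ v ∈ Δ' := by
  obtain ⟨e, heK, hve⟩ := hv
  induction e using Sym2.ind with
  | _ p q =>
  obtain ⟨hne, Δ', h', hp, hq⟩ := mem_edge_H hKeq heK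
  rcases Sym2.mem_iff.mp hve with rfl | rfl
  · exact ⟨Δ', h', hp⟩
  · exact ⟨Δ', h', hq⟩

end Aux5
/-- **Fernós-type lemma for paraclique graphs.** For a sector `ŝ` of `𝔥` and two distinct
sectors `t̂₁ ≠ t̂₂` of `𝔨`, both `t̂₁ ∩ ŝ` and `t̂₂ ∩ ŝ` are nonempty iff `𝔥` transverses `𝔨`
or `𝔨 ⊆ ŝ`. -/
theorem paraclique_sector_intersections {V : Type*} (G : SimpleGraph V)
    (hconn : G.Connected) (hpc : IsParaclique G) (H K : Set (Sym2 V))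
    (hH : IsHyperplane G H) (hK : IsHyperplane G K)
    (S : Set V) (hS : S ∈ Sectors G H)
    (T₁ T₂ : Set V) (hT₁ : T₁ ∈ Sectors G K) (hT₂ : T₂ ∈ Sectors G K) (hne : T₁ ≠ T₂) :
    ((T₁ ∩ S).Nonempty ∧ (T₂ ∩ S).Nonempty) ↔ (Transverse G H K ∨ hypVerts K ⊆ S) := by
  classical
  obtain ⟨ΔH, hΔH, hHeq⟩ := hH
  obtain ⟨ΔK, hΔK, hKeq⟩ := hK
  obtain ⟨v₀, rfl⟩ := hS
  obtain ⟨v₁, rfl⟩ := hT₁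
  obtain ⟨v₂, rfl⟩ := hT₂
  have hclsH : IsMaxClique G ΔH ∧ Parallel G ΔH ΔH := ⟨hΔH, par_refl hΔH.1⟩
  have hclsK : IsMaxClique G ΔK ∧ Parallel G ΔK ΔK := ⟨hΔK, par_refl hΔK.1⟩
  -- the two distinct sectors of K give two distinct gates in ΔK
  have hgne12 : gm G ΔK v₁ ≠ gm G ΔK v₂ := by
    intro hE
    exact hne (sectorOf_eq_of_reach
      ((mem_sector_iff_gm hconn hpc hΔK hKeq hclsK).mpr hE))
  have hc₁mem : gm G ΔK v₁ ∈ ΔK := gm_mem (hpc.1 ΔK hΔK) v₁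
  have hc₂mem : gm G ΔK v₂ ∈ ΔK := gm_mem (hpc.1 ΔK hΔK) v₂
  have hc₁T : gm G ΔK v₁ ∈ sectorOf G K v₁ :=
    (reach_gm hconn hpc hΔK hKeq hclsK v₁).symm
  have hc₂T : gm G ΔK v₂ ∈ sectorOf G K v₂ :=
    (reach_gm hconn hpc hΔK hKeq hclsK v₂).symm
  -- every vertex of ΔK is a vertex of the hyperplane K
  have hKverts : ∀ c ∈ ΔK, c ∈ hypVerts K := by
    intro c hc
    rcases eq_or_ne c (gm G ΔK v₁) with hE | hne1
    · exact ⟨s(c, gm G ΔK v₂), edge_mem_H hKeq hclsK hc hc₂mem (hE ▸ hgne12),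
        Sym2.mem_mk_left _ _⟩
    · exact ⟨s(c, gm G ΔK v₁), edge_mem_H hKeq hclsK hc hc₁mem hne1,
        Sym2.mem_mk_left _ _⟩
  by_cases hHK : H = K
  · -- degenerate case: the two hyperplanes coincide; both sides are false
    subst hHK
    constructor
    · rintro ⟨⟨z₁, hz₁T, hz₁S⟩, ⟨z₂, hz₂T, hz₂S⟩⟩
      exfalso
      refine hne ?_
      calc sectorOf G H v₁ = sectorOf G H z₁ := (sectorOf_eq_of_reach hz₁T).symm
        _ = sectorOf G H v₀ := sectorOf_eq_of_reach hz₁S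
        _ = sectorOf G H z₂ := (sectorOf_eq_of_reach hz₂S).symm
        _ = sectorOf G H v₂ := sectorOf_eq_of_reach hz₂T
    · rintro (htr | hsub)
      · exact absurd Set.Subset.rfl
          (htr _ ⟨v₀, rfl⟩ _ ⟨v₀, rfl⟩).1
      · exfalso
        have hone : sectorOf G H v₁ ≠ sectorOf G H v₀ ∨
            sectorOf G H v₂ ≠ sectorOf G H v₀ := by
          by_contra hcon
          push_neg at hcon
          exact hne (hcon.1.trans hcon.2.symm)
        rcases hone with h1 | h2
        · have r1 : (G.deleteEdges H).Reachable (gm G ΔK v₁) v₁ := hc₁T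
          have r0 : (G.deleteEdges H).Reachable (gm G ΔK v₁) v₀ := hsub (hKverts _ hc₁mem)
          exact h1 ((sectorOf_eq_of_reach r1).symm.trans (sectorOf_eq_of_reach r0))
        · have r1 : (G.deleteEdges H).Reachable (gm G ΔK v₂) v₂ := hc₂T
          have r0 : (G.deleteEdges H).Reachable (gm G ΔK v₂) v₀ := hsub (hKverts _ hc₂mem)
          exact h2 ((sectorOf_eq_of_reach r1).symm.trans (sectorOf_eq_of_reach r0))
  · -- the two hyperplanes are edge-disjoint
    have hdisj : ∀ e ∈ H, e ∉ K := fun e heH heK =>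
      hHK (hyp_eq_of_common_edge hconn hpc hΔH hΔK hHeq hKeq heH heK)
    have hdisj' : ∀ e ∈ K, e ∉ H := fun e heK heH => hdisj e heH heK
    constructor
    · rintro ⟨⟨z₁, hz₁T, hz₁S⟩, ⟨z₂, hz₂T, hz₂S⟩⟩
      by_cases hsub : hypVerts K ⊆ sectorOf G H v₀
      · exact Or.inr hsub
      left
      -- a clique of K inside S
      have hgz : gm G ΔK z₁ ≠ gm G ΔK z₂ := by
        have e1 : gm G ΔK z₁ = gm G ΔK v₁ :=
          gm_const_reach hconn hpc hΔK hKeq hclsK hz₁T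
        have e2 : gm G ΔK z₂ = gm G ΔK v₂ :=
          gm_const_reach hconn hpc hΔK hKeq hclsK hz₂T
        rw [e1, e2]; exact hgne12
      have hreach12 : (G.deleteEdges H).Reachable z₁ z₂ :=
        (hz₁S : (G.deleteEdges H).Reachable z₁ v₀).trans (hz₂S : _).symm
      obtain ⟨ΔB, hΔBcls, hΔBreach⟩ :=
        clique_in_sector hconn hpc hΔK hKeq hdisj' hclsK hreach12 hgz
      -- a vertex of K outside S, and a clique of K outside S
      obtain ⟨vs, hvsK, hvsnot⟩ := Set.not_subset.mp hsub
      obtain ⟨Δs, hΔscls, hvsΔs⟩ := hyp_vert_clique hKeq hvsK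
      -- every sector of K meets S and the sector of vs
      have hMeet0 : ∀ u : V, ∃ z, z ∈ sectorOf G K u ∧ z ∈ sectorOf G H v₀ := by
        intro u
        refine ⟨gm G ΔB u, (reach_gm hconn hpc hΔK hKeq hΔBcls u).symm, ?_⟩
        exact ((hΔBreach _ (gm_mem (hpc.1 ΔB hΔBcls.1) u)).symm.trans
          (hz₁S : _) : _)
      have hMeets : ∀ u : V, ∃ z, z ∈ sectorOf G K u ∧ z ∈ sectorOf G H vs := by
        intro u
        refine ⟨gm G Δs u, (reach_gm hconn hpc hΔK hKeq hΔscls u).symm, ?_⟩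
        exact (clique_reach hKeq hdisj' hΔscls
          (gm_mem (hpc.1 Δs hΔscls.1) u) hvsΔs : _)
      -- hence every sector of K meets every sector of H
      have hAll : ∀ w u : V, ∃ z, z ∈ sectorOf G K u ∧ z ∈ sectorOf G H w := by
        intro w u
        obtain ⟨za, hzaT, hzaS⟩ := hMeet0 u
        obtain ⟨zb, hzbT, hzbS⟩ := hMeets u
        have hgHne : gm G ΔH za ≠ gm G ΔH zb := by
          intro hE
          refine hvsnot ?_
          have h1 : (G.deleteEdges H).Reachable za zb :=
            (mem_sector_iff_gm hconn hpc hΔH hHeq hclsH).mpr hE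
          exact ((hzbS : (G.deleteEdges H).Reachable zb vs).symm.trans
            (h1.symm.trans (hzaS : _)) : _)
        have hreachK : (G.deleteEdges K).Reachable za zb :=
          (hzaT : (G.deleteEdges K).Reachable za u).trans (hzbT : _).symm
        obtain ⟨ΔA, hΔAcls, hΔAreach⟩ :=
          clique_in_sector hconn hpc hΔH hHeq hdisj hclsH hreachK hgHne
        refine ⟨gm G ΔA w, ?_, (reach_gm hconn hpc hΔH hHeq hΔAcls w).symm⟩
        exact ((hΔAreach _ (gm_mem (hpc.1 ΔA hΔAcls.1) w)).symm.trans
          (hzaT : _) : _)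
      -- conclude transversality
      rintro S' ⟨w', rfl⟩ T' ⟨u', rfl⟩
      constructor
      · intro hsub'
        obtain ⟨p1, hp1K, hp1H⟩ := hAll w' v₁
        obtain ⟨p2, hp2K, hp2H⟩ := hAll w' v₂
        have e1 : sectorOf G K v₁ = sectorOf G K u' :=
          (sectorOf_eq_of_reach (hp1K : _)).symm.trans
            (sectorOf_eq_of_reach (hsub' hp1H : _))
        have e2 : sectorOf G K v₂ = sectorOf G K u' :=
          (sectorOf_eq_of_reach (hp2K : _)).symm.trans
            (sectorOf_eq_of_reach (hsub' hp2H : _))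
        exact hne (e1.trans e2.symm)
      · intro hsub'
        obtain ⟨p1, hp1K, hp1H⟩ := hAll v₀ u'
        obtain ⟨p2, hp2K, hp2H⟩ := hAll vs u'
        refine hvsnot ?_
        have e1 : sectorOf G H v₀ = sectorOf G H w' :=
          (sectorOf_eq_of_reach (hp1H : _)).symm.trans
            (sectorOf_eq_of_reach (hsub' hp1K : _))
        have e2 : sectorOf G H vs = sectorOf G H w' :=
          (sectorOf_eq_of_reach (hp2H : _)).symm.trans
            (sectorOf_eq_of_reach (hsub' hp2K : _))
        have : vs ∈ sectorOf G H v₀ := by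
          rw [e1.trans e2.symm]
          exact sector_refl H vs
        exact this
    · rintro (htr | hsub)
      · -- transversality gives all the intersections
        have hx : ∀ u : V, (sectorOf G K u ∩ sectorOf G H v₀).Nonempty := by
          intro u
          by_cases hconst : ∀ z ∈ sectorOf G K u, gm G ΔH z = gm G ΔH u
          · exfalso
            refine (htr _ ⟨u, rfl⟩ _ ⟨u, rfl⟩).2 ?_
            intro z hz
            exact (mem_sector_iff_gm hconn hpc hΔH hHeq hclsH).mpr
              (hconst z hz)
          · push_neg at hconst
            obtain ⟨z, hzT, hzne⟩ := hconst
            obtain ⟨ΔA, hΔAcls, hΔAreach⟩ :=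
              clique_in_sector hconn hpc hΔH hHeq hdisj hclsH
                (hzT : (G.deleteEdges K).Reachable z u) hzne
            refine ⟨gm G ΔA v₀, ?_, (reach_gm hconn hpc hΔH hHeq hΔAcls v₀).symm⟩
            exact ((hΔAreach _ (gm_mem (hpc.1 ΔA hΔAcls.1) v₀)).symm.trans
              (hzT : _) : _)
        exact ⟨hx v₁, hx v₂⟩
      · exact ⟨⟨gm G ΔK v₁, hc₁T, hsub (hKverts _ hc₁mem)⟩,
          ⟨gm G ΔK v₂, hc₂T, hsub (hKverts _ hc₂mem)⟩⟩
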